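/- arXiv:2107.13641 — 5 statements merged into one kernel-verified Lean document; each statement's English description precedes it below -/
import Mathlib

section
/- Let v : ℝ → ℝ be a measurable speed function and ρ, V constants with 0 < ρ ≤ v(t) ≤ V for all t, and fix an arc length L ≥ 0. If t₁ < t₂ and τ₁, τ₂ ≥ 0 satisfy ∫_{t₁}^{t₁+τ₁} v(μ) dμ = L and ∫_{t₂}^{t₂+τ₂} v(μ) dμ = L, then t₁ + τ₁ < t₂ + τ₂. (The IGP travel times satisfy the first-in-first-out property: leaving later implies arriving strictly later.) -/
open MeasureTheory intervalIntegral

/-- **FIFO property of IGP travel times.**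
If `v` is a measurable speed function with `0 < ρ ≤ v t ≤ V` for all `t`, `L ≥ 0` is an arc
length, `t₁ < t₂` and `τ₁, τ₂ ≥ 0` satisfy the IGP relation for start times `t₁` and `t₂`
respectively, then leaving later implies arriving strictly later: `t₁ + τ₁ < t₂ + τ₂`. -/
theorem igp_fifo
    (v : ℝ → ℝ) (hv : Measurable v) (ρ V : ℝ) (hρ : 0 < ρ)
    (hbound : ∀ t : ℝ, ρ ≤ v t ∧ v t ≤ V)
    (L : ℝ) (hL : 0 ≤ L)
    (t₁ t₂ τ₁ τ₂ : ℝ) (ht : t₁ < t₂) (hτ₁ : 0 ≤ τ₁) (hτ₂ : 0 ≤ τ₂)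
    (h₁ : (∫ μ in t₁..(t₁ + τ₁), v μ) = L)
    (h₂ : (∫ μ in t₂..(t₂ + τ₂), v μ) = L) :
    t₁ + τ₁ < t₂ + τ₂ := by
  have hint : ∀ a b : ℝ, IntervalIntegrable v volume a b := by
    intro a b
    apply _root_.intervalIntegrable_const (c := V) |>.mono_fun hv.aestronglyMeasurable
    filter_upwards with x
    rw [Real.norm_eq_abs, abs_of_pos (lt_of_lt_of_le hρ (hbound x).1), Real.norm_eq_abs]
    exact le_trans (hbound x).2 (le_abs_self V)
  by_contra h
  push_neg at h
  -- split ∫_{t₁}^{t₁+τ₁} = ∫_{t₁}^{t₂} + ∫_{t₂}^{t₂+τ₂} + ∫_{t₂+τ₂}^{t₁+τ₁}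
  have hsplit : (∫ μ in t₁..(t₁ + τ₁), v μ)
      = (∫ μ in t₁..t₂, v μ) + (∫ μ in t₂..(t₂ + τ₂), v μ)
        + (∫ μ in (t₂ + τ₂)..(t₁ + τ₁), v μ) := by
    rw [integral_add_adjacent_intervals (hint _ _) (hint _ _),
      integral_add_adjacent_intervals (hint _ _) (hint _ _)]
  have h12 : ρ * (t₂ - t₁) ≤ ∫ μ in t₁..t₂, v μ := by
    have := intervalIntegral.integral_mono_on ht.le intervalIntegrable_const (hint t₁ t₂)
      (fun x _ => (hbound x).1)
    simpa [mul_comm] using this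
  have h3 : 0 ≤ ∫ μ in (t₂ + τ₂)..(t₁ + τ₁), v μ := by
    have := intervalIntegral.integral_mono_on h intervalIntegrable_const (hint _ _)
      (fun x _ => (hρ.le.trans (hbound x).1))
    simpa [mul_comm] using this
  have hpos : 0 < ρ * (t₂ - t₁) := mul_pos hρ (by linarith)
  rw [h₁, h₂] at hsplit
  linarith
end

section
/- Let v : ℝ → ℝ be a measurable speed function with 0 < ρ ≤ v(t) ≤ V for all t, and suppose every arc (i,j) of a finite directed graph has a length L_{ij} ≥ 0 and travel-time function τ_{ij} defined by the IGP relation L_{ij} = ∫_t^{t+τ_{ij}(t)} v(μ) dμ. Then for any two paths p′ and p″ and any start time t, the path p′ is shorter than p″ if and only if it is quicker: Σ_{(i,j)∈p′} L_{ij} ≤ Σ_{(i,j)∈p″} L_{ij} ⟺ z(p′,t) ≤ z(p″,t). In particular, Σ_{(i,j)∈p′} L_{ij} ≤ Σ_{(i,j)∈p″} L_{ij} if and only if z(p′,t) ≤ z(p″,t) for every t ≥ 0. -/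
open MeasureTheory intervalIntegral

/-- The duration `z(p, t)` of a path `p` (a list of vertices) started at time `t`,
given travel-time functions `τ i j : ℝ → ℝ` for the arcs. -/
def duration {ι : Type*} (τ : ι → ι → ℝ → ℝ) : List ι → ℝ → ℝ
  | [], _ => 0
  | [_], _ => 0
  | i :: j :: p, t => τ i j t + duration τ (j :: p) (t + τ i j t)

/-- The total length of a path `p`: the sum of the arc lengths `L i j` over the arcs
`(i,j)` traversed by `p`. -/
def pathLength {ι : Type*} (L : ι → ι → ℝ) (p : List ι) : ℝ :=
  ((p.zip p.tail).map fun e => L e.1 e.2).sum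

/-- **A path is shorter iff it is quicker.**
If all arcs of a finite directed graph have IGP travel-time functions generated from a common
measurable speed `v` with `0 < ρ ≤ v t ≤ V`, then for any two paths `p'`, `p''` and any start
time `t`, `Σ_{(i,j)∈p'} L i j ≤ Σ_{(i,j)∈p''} L i j ↔ z(p',t) ≤ z(p'',t)`; in particular,
`p'` is shorter than `p''` iff `z(p',t) ≤ z(p'',t)` for every `t ≥ 0`. -/
theorem igp_shorter_iff_quicker
    {ι : Type*} [Fintype ι]
    (v : ℝ → ℝ) (hv : Measurable v) (ρ V : ℝ) (hρ : 0 < ρ)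
    (hbound : ∀ t : ℝ, ρ ≤ v t ∧ v t ≤ V)
    (L : ι → ι → ℝ) (τ : ι → ι → ℝ → ℝ)
    (hL : ∀ i j : ι, 0 ≤ L i j)
    (hτ : ∀ (i j : ι) (t : ℝ), 0 ≤ τ i j t)
    (hIGP : ∀ (i j : ι) (t : ℝ), (∫ μ in t..(t + τ i j t), v μ) = L i j)
    (p' p'' : List ι) :
    (∀ t : ℝ, pathLength L p' ≤ pathLength L p'' ↔ duration τ p' t ≤ duration τ p'' t)
    ∧ (pathLength L p' ≤ pathLength L p'' ↔
        ∀ t : ℝ, 0 ≤ t → duration τ p' t ≤ duration τ p'' t) := by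
  -- integrability of v on any interval
  have hint : ∀ a b : ℝ, IntervalIntegrable v volume a b := by
    intro a b
    apply IntervalIntegrable.mono_fun' (g := fun _ => max |ρ| |V|)
      intervalIntegrable_const hv.aestronglyMeasurable.restrict
    filter_upwards with x
    have h1 := (hbound x).1
    have h2 := (hbound x).2
    rw [Real.norm_eq_abs, abs_le]
    have h3 := neg_abs_le ρ
    have h4 := le_max_left |ρ| |V|
    have h5 := le_abs_self V
    have h6 := le_max_right |ρ| |V|
    constructor <;> linarith
  set F : ℝ → ℝ := fun t => ∫ μ in (0:ℝ)..t, v μ with hF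
  have hadd : ∀ a b : ℝ, F a + (∫ μ in a..b, v μ) = F b := fun a b =>
    integral_add_adjacent_intervals (hint 0 a) (hint a b)
  have hmono : StrictMono F := by
    intro a b hab
    have h1 : ρ * (b - a) ≤ ∫ μ in a..b, v μ := by
      calc ρ * (b - a) = ∫ _ in a..b, ρ := by
            rw [intervalIntegral.integral_const, smul_eq_mul]; ring
        _ ≤ ∫ μ in a..b, v μ :=
          integral_mono_on hab.le intervalIntegrable_const (hint a b)
            (fun x _ => (hbound x).1)
    have h2 : 0 < ∫ μ in a..b, v μ := lt_of_lt_of_le (by nlinarith) h1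
    have h3 := hadd a b
    linarith
  have key : ∀ (p : List ι) (t : ℝ), F (t + duration τ p t) = F t + pathLength L p := by
    intro p
    induction p with
    | nil => intro t; simp [duration, pathLength]
    | cons i q ih =>
      match q, ih with
      | [], _ => intro t; simp [duration, pathLength]
      | j :: q, ih =>
        intro t
        have h1 : t + duration τ (i :: j :: q) t
            = (t + τ i j t) + duration τ (j :: q) (t + τ i j t) := by
          simp only [duration]; ring
        rw [h1, ih (t + τ i j t)]
        have h2 : F (t + τ i j t) = F t + L i j := by
          rw [← hadd t (t + τ i j t), hIGP i j t]
        rw [h2]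
        have h3 : pathLength L (i :: j :: q) = L i j + pathLength L (j :: q) := by
          simp [pathLength]
        rw [h3]; ring
  have main : ∀ t : ℝ, pathLength L p' ≤ pathLength L p'' ↔
      duration τ p' t ≤ duration τ p'' t := by
    intro t
    rw [← add_le_add_iff_left (F t), ← key p' t, ← key p'' t, hmono.le_iff_le,
      add_le_add_iff_left]
  exact ⟨main, ⟨fun h t _ => (main t).1 h, fun h => (main 0).2 (h 0 le_rfl)⟩⟩
end

section
/- Let v : ℝ → ℝ be a measurable speed function with 0 < ρ ≤ v(t) ≤ V for all t, and suppose every arc (i,j) of a finite directed graph has a length L_{ij} ≥ 0 and travel-time function τ_{ij} defined by the IGP relation L_{ij} = ∫_t^{t+τ_{ij}(t)} v(μ) dμ. Then the resulting time-dependent graph is path ranking invariant: for any two paths p′ and p″ and any two start times t₁, t₂ ∈ ℝ, z(p′, t₁) ≤ z(p″, t₁) if and only if z(p′, t₂) ≤ z(p″, t₂). -/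
open MeasureTheory intervalIntegral

/-- Total length of a path. -/
def pathLen {ι : Type*} (L : ι → ι → ℝ) : List ι → ℝ
  | [] => 0
  | [_] => 0
  | i :: j :: p => L i j + pathLen L (j :: p)

/-- **The IGP auxiliary graph is path ranking invariant.**
If all arcs of a finite directed graph have IGP travel-time functions generated from a common
measurable speed `v` with `0 < ρ ≤ v t ≤ V`, then the ranking of paths by duration is
independent of the start time: for any paths `p'`, `p''` and start times `t₁`, `t₂`,
`z(p', t₁) ≤ z(p'', t₁) ↔ z(p', t₂) ≤ z(p'', t₂)`. -/
theorem igp_path_ranking_invariant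
    {ι : Type*} [Fintype ι]
    (v : ℝ → ℝ) (hv : Measurable v) (ρ V : ℝ) (hρ : 0 < ρ)
    (hbound : ∀ t : ℝ, ρ ≤ v t ∧ v t ≤ V)
    (L : ι → ι → ℝ) (τ : ι → ι → ℝ → ℝ)
    (hL : ∀ i j : ι, 0 ≤ L i j)
    (hτ : ∀ (i j : ι) (t : ℝ), 0 ≤ τ i j t)
    (hIGP : ∀ (i j : ι) (t : ℝ), (∫ μ in t..(t + τ i j t), v μ) = L i j)
    (p' p'' : List ι) (t₁ t₂ : ℝ) :
    duration τ p' t₁ ≤ duration τ p'' t₁ ↔ duration τ p' t₂ ≤ duration τ p'' t₂ := by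
  -- v is interval integrable on every interval
  have hInt : ∀ a b : ℝ, IntervalIntegrable v volume a b := by
    intro a b
    rw [intervalIntegrable_iff]
    refine Measure.integrableOn_of_bounded (M := V) (by rw [Set.uIoc]; exact measure_Ioc_lt_top.ne) hv.aestronglyMeasurable ?_
    · filter_upwards with x
      have h1 := (hbound x).1
      have h2 := (hbound x).2
      rw [Real.norm_eq_abs, abs_le]
      constructor <;> nlinarith [hρ]
  -- the cumulative traversed distance
  set W : ℝ → ℝ := fun t => ∫ μ in (0:ℝ)..t, v μ with hW
  have hWmono : StrictMono W := by
    intro a b hab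
    have h1 : W b - W a = ∫ μ in a..b, v μ := by
      rw [hW]
      simp only
      rw [← intervalIntegral.integral_add_adjacent_intervals (hInt 0 a) (hInt a b)]
      ring
    have h2 : (∫ μ in a..b, (ρ : ℝ)) ≤ ∫ μ in a..b, v μ := by
      apply intervalIntegral.integral_mono_on hab.le (intervalIntegrable_const) (hInt a b)
      intro x _; exact (hbound x).1
    rw [intervalIntegral.integral_const, smul_eq_mul] at h2
    have : 0 < ρ * (b - a) := mul_pos hρ (by linarith)
    linarith
  -- W of arrival time equals W of start time plus path length
  have key : ∀ (p : List ι) (t : ℝ), W (t + duration τ p t) = W t + pathLen L p := by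
    intro p
    induction p with
    | nil => intro t; simp [duration, pathLen]
    | cons i q ih =>
      cases q with
      | nil => intro t; simp [duration, pathLen]
      | cons j q =>
        intro t
        have harc : W (t + τ i j t) = W t + L i j := by
          rw [← hIGP i j t, hW]
          simp only
          rw [← intervalIntegral.integral_add_adjacent_intervals (hInt 0 t) (hInt t (t + τ i j t))]
        show W (t + (τ i j t + duration τ (j :: q) (t + τ i j t))) = W t + (L i j + pathLen L (j :: q))
        rw [← add_assoc, ih (t + τ i j t), harc]
        ring
  have main : ∀ t : ℝ, (duration τ p' t ≤ duration τ p'' t ↔ pathLen L p' ≤ pathLen L p'') := by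
    intro t
    constructor
    · intro h
      have := hWmono.monotone (by linarith : t + duration τ p' t ≤ t + duration τ p'' t)
      rw [key p' t, key p'' t] at this
      linarith
    · intro h
      by_contra hc
      push_neg at hc
      have := hWmono (by linarith : t + duration τ p'' t < t + duration τ p' t)
      rw [key p' t, key p'' t] at this
      linarith
  rw [main t₁, main t₂]
end

section
/- Let G be a complete directed graph on vertex set V ∪ {0} with nonnegative travel-time functions τ_{ij} : ℝ → ℝ that are constant in the long run, i.e., τ_{ij}(t) = τ_{ij}(T) for all t ≥ T, where T > 0 is the end of the planning horizon. If G is path ranking invariant, then the cost function c(i,j) = τ_{ij}(T) is valid for the TDTSP on G: every Hamiltonian tour p minimizing the time-invariant total cost Σ_{(i,j)∈p} τ_{ij}(T) over all Hamiltonian tours also minimizes the time-dependent duration z(p, 0). -/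
/-- A Hamiltonian tour of the complete graph on the vertices, with depot `d`:
it starts at `d`, visits every other vertex (customer) exactly once, and returns to `d`. -/
def IsHamiltonianTour {ι : Type*} (d : ι) (p : List ι) : Prop :=
  ∃ q : List ι, q.Nodup ∧ (∀ x : ι, x ∈ q ↔ x ≠ d) ∧ p = d :: (q ++ [d])

/-- The cost of a path `p` with respect to the time-invariant arc costs `c i j`. -/
def pathCost {ι : Type*} (c : ι → ι → ℝ) (p : List ι) : ℝ :=
  ((p.zip p.tail).map fun e => c e.1 e.2).sum

lemma duration_eq_pathCost {ι : Type*} (τ : ι → ι → ℝ → ℝ) (T : ℝ)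
    (hτnonneg : ∀ (i j : ι) (t : ℝ), 0 ≤ τ i j t)
    (hconst : ∀ (i j : ι) (t : ℝ), T ≤ t → τ i j t = τ i j T) :
    ∀ (p : List ι) (t : ℝ), T ≤ t →
      duration τ p t = pathCost (fun i j => τ i j T) p := by
  intro p
  induction p with
  | nil => intro t ht; simp [duration, pathCost]
  | cons i p ih =>
    cases p with
    | nil => intro t ht; simp [duration, pathCost]
    | cons j p =>
      intro t ht
      rw [duration, ih _ (le_trans ht (le_add_of_nonneg_right (hτnonneg i j t)))]
      simp [pathCost, hconst i j t ht]

/-- **On a path ranking invariant graph, `c(i,j) = τ_{ij}(T)` is a valid cost function.**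
Let the travel times `τ i j` be nonnegative and constant in the long run (equal to their
value at the end `T > 0` of the horizon for all `t ≥ T`). If the graph is path ranking
invariant, then every Hamiltonian tour minimizing the time-invariant cost
`Σ_{(i,j)∈p} τ i j T` also minimizes the time-dependent duration `z(p, 0)`. -/
theorem ranking_invariant_valid_cost
    {ι : Type*} [Fintype ι] (d : ι)
    (τ : ι → ι → ℝ → ℝ) (T : ℝ) (hT : 0 < T)
    (hτnonneg : ∀ (i j : ι) (t : ℝ), 0 ≤ τ i j t)
    (hconst : ∀ (i j : ι) (t : ℝ), T ≤ t → τ i j t = τ i j T)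
    (hinv : ∀ (p' p'' : List ι) (t₁ t₂ : ℝ), 0 ≤ t₁ → 0 ≤ t₂ →
      (duration τ p' t₁ ≤ duration τ p'' t₁ ↔ duration τ p' t₂ ≤ duration τ p'' t₂))
    (p : List ι) (hp : IsHamiltonianTour d p)
    (hmin : ∀ q : List ι, IsHamiltonianTour d q →
      pathCost (fun i j => τ i j T) p ≤ pathCost (fun i j => τ i j T) q) :
    ∀ q : List ι, IsHamiltonianTour d q → duration τ p 0 ≤ duration τ q 0 := by
  intro q hq
  refine (hinv p q 0 T le_rfl hT.le).mpr ?_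
  rw [duration_eq_pathCost τ T hτnonneg hconst p T le_rfl,
    duration_eq_pathCost τ T hτnonneg hconst q T le_rfl]
  exact hmin q hq
end

section
/- Let τ and τ̄ be two families of travel-time functions on the arcs of a finite directed graph such that τ̄_{ij}(t) ≤ τ_{ij}(t) for every arc (i,j) and every t (τ̄ is a lower approximation of τ), and such that each τ̄_{ij} satisfies the FIFO property, i.e., the arrival-time map t ↦ t + τ̄_{ij}(t) is nondecreasing. Then z̄(p, t) ≤ z(p, t) for every path p and every start time t; in particular, the minimum of z̄(·, 0) over all Hamiltonian tours is a lower bound on the minimum of z(·, 0) over all Hamiltonian tours. -/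
/-- FIFO extends to paths: the arrival-time map is nondecreasing. -/
lemma arrival_monotone {ι : Type*} (τ' : ι → ι → ℝ → ℝ)
    (hfifo : ∀ i j : ι, Monotone fun t : ℝ => t + τ' i j t) :
    ∀ p : List ι, Monotone fun t : ℝ => t + duration τ' p t := by
  intro p
  induction p with
  | nil => intro a b h; simpa [duration] using h
  | cons i q ih =>
    match q, ih with
    | [], _ => intro a b h; simpa [duration] using h
    | j :: r, ih =>
      intro a b h
      simp only [duration]
      have h1 := hfifo i j h
      have h2 := ih h1
      simp only at h1 h2 ⊢
      linarith
/-- **A FIFO lower approximation of the travel times yields lower path durations.**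
If `τ' i j t ≤ τ i j t` for every arc and every time, and each `τ' i j` satisfies the FIFO
property (the arrival-time map `t ↦ t + τ' i j t` is nondecreasing), then
`z'(p, t) ≤ z(p, t)` for every path `p` and start time `t`; in particular, the minimum of
`z'(·, 0)` over Hamiltonian tours is a lower bound on the minimum of `z(·, 0)`. -/
theorem lower_approx_le_duration
    {ι : Type*} [Fintype ι] (d : ι)
    (τ τ' : ι → ι → ℝ → ℝ)
    (hle : ∀ (i j : ι) (t : ℝ), τ' i j t ≤ τ i j t)
    (hfifo : ∀ i j : ι, Monotone fun t : ℝ => t + τ' i j t) :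
    (∀ (p : List ι) (t : ℝ), duration τ' p t ≤ duration τ p t)
    ∧ (∀ p : List ι, IsHamiltonianTour d p →
        ∃ q : List ι, IsHamiltonianTour d q ∧ duration τ' q 0 ≤ duration τ p 0) := by
  have main : ∀ (p : List ι) (t : ℝ), duration τ' p t ≤ duration τ p t := by
    intro p
    induction p with
    | nil => intro t; simp [duration]
    | cons i q ih =>
      match q, ih with
      | [], _ => intro t; simp [duration]
      | j :: r, ih =>
        intro t
        simp only [duration]
        have h1 : t + τ' i j t ≤ t + τ i j t := by linarith [hle i j t]
        have h2 := arrival_monotone τ' hfifo (j :: r) h1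
        simp only at h2
        have h3 := ih (t + τ i j t)
        linarith
  exact ⟨main, fun p hp => ⟨p, hp, main p 0⟩⟩
end
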